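/- arXiv:2602.23638 — 3 statements merged into one kernel-verified Lean document; each statement's English description precedes it below -/
import Mathlib

section
/- For any positive integer N and any matrices B_1,…,B_N ∈ ℝ^{d×r} and A_1,…,A_N ∈ ℝ^{r×d}, the aggregation error satisfies ‖E‖_F ≤ (1/(2N²)) ∑_{i=1}^N ∑_{j=1}^N ‖B_i − B_j‖_F · ‖A_i − A_j‖_F. -/
open scoped BigOperators

attribute [local instance] Matrix.frobeniusNormedAddCommGroup Matrix.frobeniusNormedSpace

/-- Frobenius norm of a real matrix. -/
noncomputable def frob {m n : Type*} [Fintype m] [Fintype n] (M : Matrix m n ℝ) : ℝ :=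
  Real.sqrt (∑ i, ∑ j, (M i j) ^ 2)

lemma frob_eq_norm {m n : Type*} [Fintype m] [Fintype n] (M : Matrix m n ℝ) :
    frob M = ‖M‖ := by
  rw [Matrix.frobenius_norm_def, frob, Real.sqrt_eq_rpow]
  congr 1
  refine Finset.sum_congr rfl fun i _ => Finset.sum_congr rfl fun j _ => ?_
  rw [Real.rpow_two, Real.norm_eq_abs, sq_abs]

/-- the aggregation error of factor-wise averaging satisfies
`‖E‖_F ≤ (1/(2N²)) ∑ᵢ∑ⱼ ‖Bᵢ−Bⱼ‖_F · ‖Aᵢ−Aⱼ‖_F`. -/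
theorem aggregation_error_norm_bound (N d r : ℕ) (hN : 0 < N)
    (B : Fin N → Matrix (Fin d) (Fin r) ℝ) (A : Fin N → Matrix (Fin r) (Fin d) ℝ) :
    frob (((N : ℝ)⁻¹ • ∑ i, B i) * ((N : ℝ)⁻¹ • ∑ i, A i) - (N : ℝ)⁻¹ • ∑ i, B i * A i)
      ≤ (1 / (2 * (N : ℝ) ^ 2)) * ∑ i, ∑ j, frob (B i - B j) * frob (A i - A j) := by
  have hN' : (N : ℝ) ≠ 0 := Nat.cast_ne_zero.mpr hN.ne'
  have key : (((N : ℝ)⁻¹ • ∑ i, B i) * ((N : ℝ)⁻¹ • ∑ i, A i) - (N : ℝ)⁻¹ • ∑ i, B i * A i)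
      = (-(1 / (2 * (N : ℝ) ^ 2))) • ∑ i, ∑ j, (B i - B j) * (A i - A j) := by
    have expand : ∑ i, ∑ j, (B i - B j) * (A i - A j)
        = (N : ℝ) • (∑ i, B i * A i) - (∑ i, B i) * (∑ i, A i)
          - ((∑ i, B i) * (∑ i, A i) - (N : ℝ) • (∑ i, B i * A i)) := by
      simp only [Matrix.sub_mul, Matrix.mul_sub, Finset.sum_sub_distrib,
        ← Matrix.mul_sum, ← Matrix.sum_mul, Finset.sum_const, Finset.card_univ,
        Fintype.card_fin, ← Nat.cast_smul_eq_nsmul ℝ, ← Finset.smul_sum]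
    rw [expand, Matrix.smul_mul, Matrix.mul_smul, smul_smul]
    match_scalars <;> field_simp <;> ring
  rw [frob_eq_norm, key, norm_smul, Real.norm_eq_abs, abs_neg, abs_of_pos (by positivity)]
  gcongr
  calc ‖∑ i, ∑ j, (B i - B j) * (A i - A j)‖
      ≤ ∑ i, ∑ j, ‖(B i - B j) * (A i - A j)‖ := by
        refine (norm_sum_le _ _).trans (Finset.sum_le_sum fun i _ => norm_sum_le _ _)
    _ ≤ ∑ i, ∑ j, frob (B i - B j) * frob (A i - A j) := by
        refine Finset.sum_le_sum fun i _ => Finset.sum_le_sum fun j _ => ?_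
        rw [frob_eq_norm, frob_eq_norm]
        exact Matrix.frobenius_norm_mul _ _
end

section
/- For any positive integer N, any matrices B_1,…,B_N ∈ ℝ^{d×r} and A_1,…,A_N ∈ ℝ^{r×d}, and any fixed reference matrices B_ref ∈ ℝ^{d×r} and A_ref ∈ ℝ^{r×d}, the aggregation error satisfies ‖E‖_F ≤ (1/N) ∑_{i=1}^N ‖B_i − B_ref‖_F² + (1/N) ∑_{i=1}^N ‖A_i − A_ref‖_F². -/
open scoped BigOperators

attribute [local instance] Matrix.frobeniusNormedAddCommGroup Matrix.frobeniusNormedSpace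

/-- aggregation error bound in terms of deviations from fixed
reference matrices:
`‖E‖_F ≤ (1/N) ∑ᵢ ‖Bᵢ−B_ref‖_F² + (1/N) ∑ᵢ ‖Aᵢ−A_ref‖_F²`. -/
theorem aggregation_error_ref_bound (N d r : ℕ) (hN : 0 < N)
    (B : Fin N → Matrix (Fin d) (Fin r) ℝ) (A : Fin N → Matrix (Fin r) (Fin d) ℝ)
    (Bref : Matrix (Fin d) (Fin r) ℝ) (Aref : Matrix (Fin r) (Fin d) ℝ) :
    frob (((N : ℝ)⁻¹ • ∑ i, B i) * ((N : ℝ)⁻¹ • ∑ i, A i) - (N : ℝ)⁻¹ • ∑ i, B i * A i)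
      ≤ (N : ℝ)⁻¹ * ∑ i, frob (B i - Bref) ^ 2 + (N : ℝ)⁻¹ * ∑ i, frob (A i - Aref) ^ 2 := by
  have hN' : (N : ℝ) ≠ 0 := Nat.cast_ne_zero.mpr hN.ne'
  have hNpos : (0 : ℝ) < N := Nat.cast_pos.mpr hN
  set c : ℝ := (N : ℝ)⁻¹ with hc
  have hc0 : 0 ≤ c := by positivity
  have h1 : c * (N : ℝ) = 1 := inv_mul_cancel₀ hN'
  -- key algebraic identity
  have e1 : ∑ i, (B i - Bref) = (∑ i, B i) - (N : ℝ) • Bref := by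
    rw [Finset.sum_sub_distrib, Finset.sum_const, Finset.card_univ, Fintype.card_fin,
      Nat.cast_smul_eq_nsmul]
  have e2 : ∑ i, (A i - Aref) = (∑ i, A i) - (N : ℝ) • Aref := by
    rw [Finset.sum_sub_distrib, Finset.sum_const, Finset.card_univ, Fintype.card_fin,
      Nat.cast_smul_eq_nsmul]
  have e3 : ∑ i, (B i - Bref) * (A i - Aref)
      = (∑ i, B i * A i) - (∑ i, B i) * Aref - Bref * (∑ i, A i) + (N : ℝ) • (Bref * Aref) := by
    simp only [Matrix.sub_mul, Matrix.mul_sub, Finset.sum_sub_distrib,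
      Finset.sum_const, Finset.card_univ, Fintype.card_fin, Nat.cast_smul_eq_nsmul,
      Matrix.sum_mul, Matrix.mul_sum]
    abel
  have key : (c • ∑ i, B i) * (c • ∑ i, A i) - c • ∑ i, B i * A i
      = (c • ∑ i, (B i - Bref)) * (c • ∑ i, (A i - Aref))
        - c • ∑ i, (B i - Bref) * (A i - Aref) := by
    rw [e1, e2, e3]
    simp only [smul_sub, smul_add, Matrix.sub_mul, Matrix.mul_sub, Matrix.smul_mul,
      Matrix.mul_smul, smul_smul, h1, one_smul]
    abel
  rw [frob_eq_norm, key]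
  simp only [frob_eq_norm]
  set x : Fin N → ℝ := fun i => ‖B i - Bref‖ with hx
  set y : Fin N → ℝ := fun i => ‖A i - Aref‖ with hy
  have hx0 : ∀ i, 0 ≤ x i := fun i => norm_nonneg _
  have hy0 : ∀ i, 0 ≤ y i := fun i => norm_nonneg _
  -- norm bound
  have step1 : ‖(c • ∑ i, (B i - Bref)) * (c • ∑ i, (A i - Aref))
        - c • ∑ i, (B i - Bref) * (A i - Aref)‖
      ≤ (c * ∑ i, x i) * (c * ∑ i, y i) + c * ∑ i, x i * y i := by
    refine (norm_sub_le _ _).trans (add_le_add ?_ ?_)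
    · refine (Matrix.frobenius_norm_mul _ _).trans ?_
      have hb : ‖c • ∑ i, (B i - Bref)‖ ≤ c * ∑ i, x i := by
        rw [norm_smul, Real.norm_eq_abs, abs_of_nonneg hc0]
        exact mul_le_mul_of_nonneg_left (norm_sum_le _ _) hc0
      have ha : ‖c • ∑ i, (A i - Aref)‖ ≤ c * ∑ i, y i := by
        rw [norm_smul, Real.norm_eq_abs, abs_of_nonneg hc0]
        exact mul_le_mul_of_nonneg_left (norm_sum_le _ _) hc0
      exact mul_le_mul hb ha (norm_nonneg _) (by positivity)
    · rw [norm_smul, Real.norm_eq_abs, abs_of_nonneg hc0]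
      refine mul_le_mul_of_nonneg_left ((norm_sum_le _ _).trans ?_) hc0
      exact Finset.sum_le_sum fun i _ => Matrix.frobenius_norm_mul _ _
  refine step1.trans ?_
  -- real-number inequality
  have cs : (∑ i, x i) ^ 2 ≤ (N : ℝ) * ∑ i, x i ^ 2 := by
    have := sq_sum_le_card_mul_sum_sq (s := Finset.univ) (f := x)
    simpa [Finset.card_univ] using this
  have cs' : (∑ i, y i) ^ 2 ≤ (N : ℝ) * ∑ i, y i ^ 2 := by
    have := sq_sum_le_card_mul_sum_sq (s := Finset.univ) (f := y)
    simpa [Finset.card_univ] using this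
  have hX : (c * ∑ i, x i) ^ 2 ≤ c * ∑ i, x i ^ 2 := by
    have : (c * ∑ i, x i) ^ 2 = c * (c * (∑ i, x i) ^ 2) := by ring
    rw [this]
    calc c * (c * (∑ i, x i) ^ 2) ≤ c * (c * ((N : ℝ) * ∑ i, x i ^ 2)) := by
          have := mul_le_mul_of_nonneg_left cs hc0
          exact mul_le_mul_of_nonneg_left this hc0
      _ = (c * (N : ℝ)) * (c * ∑ i, x i ^ 2) := by ring
      _ = c * ∑ i, x i ^ 2 := by rw [h1, one_mul]
  have hY : (c * ∑ i, y i) ^ 2 ≤ c * ∑ i, y i ^ 2 := by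
    have : (c * ∑ i, y i) ^ 2 = c * (c * (∑ i, y i) ^ 2) := by ring
    rw [this]
    calc c * (c * (∑ i, y i) ^ 2) ≤ c * (c * ((N : ℝ) * ∑ i, y i ^ 2)) := by
          have := mul_le_mul_of_nonneg_left cs' hc0
          exact mul_le_mul_of_nonneg_left this hc0
      _ = (c * (N : ℝ)) * (c * ∑ i, y i ^ 2) := by ring
      _ = c * ∑ i, y i ^ 2 := by rw [h1, one_mul]
  have hxy : ∑ i, x i * y i ≤ (∑ i, x i ^ 2 + ∑ i, y i ^ 2) / 2 := by
    rw [← Finset.sum_add_distrib, Finset.sum_div]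
    refine Finset.sum_le_sum fun i _ => ?_
    nlinarith [sq_nonneg (x i - y i)]
  have hprod : (c * ∑ i, x i) * (c * ∑ i, y i)
      ≤ (c * ∑ i, x i ^ 2 + c * ∑ i, y i ^ 2) / 2 := by
    nlinarith [sq_nonneg (c * ∑ i, x i - c * ∑ i, y i)]
  have h2 : c * ∑ i, x i * y i ≤ (c * ∑ i, x i ^ 2 + c * ∑ i, y i ^ 2) / 2 := by
    calc c * ∑ i, x i * y i ≤ c * ((∑ i, x i ^ 2 + ∑ i, y i ^ 2) / 2) :=
          mul_le_mul_of_nonneg_left hxy hc0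
      _ = (c * ∑ i, x i ^ 2 + c * ∑ i, y i ^ 2) / 2 := by ring
  linarith
end

section
/- Let H be a real inner product space, let f : H → ℝ be differentiable with gradient ∇f, and let L ≥ 0, G ≥ 0, η > 0. Assume f is L-smooth. Let W, W', E ∈ H and set W_ideal = W' − E. If ‖∇f(W)‖ ≤ G and ‖∇f(W_ideal)‖ ≤ G, then f(W') ≤ f(W) + (3L/2 + 1/η²)‖E‖² + ⟨∇f(W), W' − W⟩ + L‖W' − W‖² + η²G². -/
open scoped RealInnerProductSpace

/-- two-step smoothness bound through the ideal iterate
`W_ideal = W' − E`: if `f` is `L`-smooth with gradient `g` and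
`‖g W‖ ≤ G`, `‖g (W' − E)‖ ≤ G`, then
`f(W') ≤ f(W) + (3L/2 + 1/η²)‖E‖² + ⟪g W, W' − W⟫ + L‖W' − W‖² + η²G²`. -/
theorem smooth_two_step_bound {H : Type*} [NormedAddCommGroup H] [InnerProductSpace ℝ H]
    (f : H → ℝ) (g : H → H) (L G η : ℝ) (hL : 0 ≤ L) (hG : 0 ≤ G) (hη : 0 < η)
    (hdiff : ∀ x : H, HasFDerivAt f ((innerSL ℝ) (g x)) x)
    (hsmooth : ∀ X Y : H, f Y ≤ f X + ⟪g X, Y - X⟫ + L / 2 * ‖Y - X‖ ^ 2)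
    (W W' E : H)
    (hgradW : ‖g W‖ ≤ G) (hgradIdeal : ‖g (W' - E)‖ ≤ G) :
    f W' ≤ f W + (3 * L / 2 + 1 / η ^ 2) * ‖E‖ ^ 2 + ⟪g W, W' - W⟫
        + L * ‖W' - W‖ ^ 2 + η ^ 2 * G ^ 2 := by
  set I := W' - E with hI
  have h1 := hsmooth I W'
  have h2 := hsmooth W I
  have e1 : W' - I = E := by simp [hI]
  have e2 : I - W = (W' - W) - E := by simp [hI]; abel
  rw [e1] at h1
  rw [e2] at h2
  -- expand ⟪g W, (W'-W) - E⟫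
  have hinner : ⟪g W, (W' - W) - E⟫ = ⟪g W, W' - W⟫ - ⟪g W, E⟫ := by
    rw [inner_sub_right]
  rw [hinner] at h2
  -- Cauchy-Schwarz bounds
  have cs1 : ⟪g I, E⟫ ≤ ‖g I‖ * ‖E‖ := real_inner_le_norm _ _
  have cs2 : -⟪g W, E⟫ ≤ ‖g W‖ * ‖E‖ := by
    have := abs_real_inner_le_norm (g W) E
    have := abs_le.mp this
    linarith [this.1]
  have hE : (0:ℝ) ≤ ‖E‖ := norm_nonneg _
  have hgI : ‖g I‖ * ‖E‖ ≤ G * ‖E‖ := mul_le_mul_of_nonneg_right hgradIdeal hE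
  have hgW : ‖g W‖ * ‖E‖ ≤ G * ‖E‖ := mul_le_mul_of_nonneg_right hgradW hE
  -- Young's inequality: G‖E‖ ≤ η²G²/2 + ‖E‖²/(2η²)
  have hη2 : (0:ℝ) < η ^ 2 := by positivity
  have young : G * ‖E‖ ≤ η ^ 2 * G ^ 2 / 2 + ‖E‖ ^ 2 / (2 * η ^ 2) := by
    rw [← sub_nonneg]
    have heq : η ^ 2 * G ^ 2 / 2 + ‖E‖ ^ 2 / (2 * η ^ 2) - G * ‖E‖
        = (η ^ 2 * G - ‖E‖) ^ 2 / (2 * η ^ 2) := by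
      field_simp; ring
    rw [heq]; positivity
  -- norm expansion: ‖(W'-W) - E‖² ≤ 2‖W'-W‖² + 2‖E‖²
  have hnorm : ‖(W' - W) - E‖ ^ 2 ≤ 2 * ‖W' - W‖ ^ 2 + 2 * ‖E‖ ^ 2 := by
    have h := norm_sub_sq_real (W' - W) E
    have hcs := abs_real_inner_le_norm (W' - W) E
    have hcs' := (abs_le.mp hcs).1
    nlinarith [sq_nonneg (‖W' - W‖ - ‖E‖)]
  have hL2 : L / 2 * ‖(W' - W) - E‖ ^ 2 ≤ L / 2 * (2 * ‖W' - W‖ ^ 2 + 2 * ‖E‖ ^ 2) :=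
    mul_le_mul_of_nonneg_left hnorm (by linarith)
  have hinv : ‖E‖ ^ 2 / (2 * η ^ 2) = (1 / η ^ 2) * ‖E‖ ^ 2 / 2 := by ring
  nlinarith [hL2, young, cs1, cs2, hgI, hgW, h1, h2]
end
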